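/- arXiv:1210.4798 — 2 statements merged into one kernel-verified Lean document; each statement's English description precedes it below -/
import Mathlib

section
/- In the site-percolation model on the directed n-hypercube where each interior vertex is present independently with probability ε_n, if n·ε_n → ∞ as n → ∞, then Var(Y) = o(E[Y]^2), and hence Y/E[Y] → 1 in probability, where E[Y] = n! ε_n^{n-1}. -/
open MeasureTheory Filter
open scoped Classical ENNReal

noncomputable section

/-- The vertex reached after `t` steps along the monotone path in the directed `n`-hypercube
encoded by the permutation `π`. -/
def pathVertex (n : ℕ) (π : Equiv.Perm (Fin n)) (t : ℕ) : Fin n → Bool :=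
  fun i => decide ((π.symm i : ℕ) < t)

/-- Site-percolation measure: each vertex of the hypercube is present (`true`)
independently with probability `ε`. -/
def percMeasure (n : ℕ) (ε : ℝ≥0∞) (h : ε ≤ 1) : Measure ((Fin n → Bool) → Bool) :=
  Measure.pi fun _ => (PMF.bernoulli ε.toNNReal
    (by simpa using ENNReal.toNNReal_mono ENNReal.one_ne_top h)).toMeasure

/-- The number of monotone paths from all-zeroes to all-ones all of whose interior
vertices are present. (The endpoints are always present.) -/
def numOpen (n : ℕ) (ρ : (Fin n → Bool) → Bool) : ℕ :=
  (Finset.univ.filter fun π : Equiv.Perm (Fin n) =>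
    ∀ t ∈ Finset.Ioo 0 n, ρ (pathVertex n π t) = true).card

section Auxiliary
open Finset Equiv



lemma factAux : ∀ (d b : ℕ), d + 2 ≤ b →
    (d + 2).factorial * b.factorial ≤ 2 * ((d + 2) + b - 2).factorial := by
  intro d
  induction d with
  | zero =>
      intro b hb
      have h : 0 + 2 + b - 2 = b := by omega
      rw [h]
      simp [Nat.factorial]
  | succ d ih =>
      intro b hb
      have h1 : (d + 1 + 2).factorial * b.factorial ≤ (d + 2).factorial * (b+1).factorial := by
        have e1 : (d + 1 + 2).factorial = (d + 3) * (d + 2).factorial := by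
          rw [show d + 1 + 2 = (d+2) + 1 by ring, Nat.factorial_succ]
        have e2 : (b + 1).factorial = (b + 1) * b.factorial := Nat.factorial_succ b
        rw [e1, e2]
        calc (d + 3) * (d + 2).factorial * b.factorial
            = (d + 3) * ((d + 2).factorial * b.factorial) := by ring
          _ ≤ (b + 1) * ((d + 2).factorial * b.factorial) :=
              Nat.mul_le_mul_right _ (by omega)
          _ = (d + 2).factorial * ((b + 1) * b.factorial) := by ring
      have h2 := ih (b + 1) (by omega)
      have h3 : d + 2 + (b + 1) - 2 = d + 1 + 2 + b - 2 := by omega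
      rw [h3] at h2
      exact le_trans h1 h2

lemma fact_mul_fact_le {a b : ℕ} (ha : 2 ≤ a) (hb : 2 ≤ b) :
    a.factorial * b.factorial ≤ 2 * (a + b - 2).factorial := by
  rcases le_total a b with h | h
  · obtain ⟨d, rfl⟩ : ∃ d, a = d + 2 := ⟨a - 2, by omega⟩
    exact factAux d b h
  · obtain ⟨d, rfl⟩ : ∃ d, b = d + 2 := ⟨b - 2, by omega⟩
    have := factAux d a h
    rw [mul_comm] at this
    have h4 : d + 2 + a - 2 = a + (d+2) - 2 := by omega
    rw [h4] at this
    exact this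

lemma sum_fact_aux (M : ℕ) :
    ∑ t ∈ Ioo 0 M, t.factorial * (M - t).factorial ≤ 5 * (M - 1).factorial := by
  rcases le_or_gt M 2 with hM | hM
  · interval_cases M
    · simp
    · rw [show Ioo 0 1 = (∅ : Finset ℕ) from rfl]; simp
    · rw [show Ioo 0 2 = {1} from rfl]
      simp [Nat.factorial]
  · have hsplit : Ioo 0 M = insert 1 (insert (M-1) (Ioo 1 (M-1))) := by
      ext x
      simp only [mem_Ioo, mem_insert]
      omega
    have h1 : (1:ℕ) ∉ insert (M-1) (Ioo 1 (M-1)) := by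
      simp only [mem_insert, mem_Ioo]; omega
    have h2 : M - 1 ∉ Ioo 1 (M-1) := by simp [mem_Ioo]
    rw [hsplit, sum_insert h1, sum_insert h2]
    have e1 : (1:ℕ).factorial * (M - 1).factorial = (M-1).factorial := by
      simp [Nat.factorial]
    have e2 : (M-1).factorial * (M - (M-1)).factorial = (M-1).factorial := by
      rw [show M - (M-1) = 1 by omega]
      simp [Nat.factorial]
    have hmid : ∑ t ∈ Ioo 1 (M-1), t.factorial * (M - t).factorial
        ≤ (Ioo 1 (M-1)).card • (2 * (M-2).factorial) := by
      apply sum_le_card_nsmul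
      intro t ht
      rw [mem_Ioo] at ht
      have := fact_mul_fact_le (a := t) (b := M - t) (by omega) (by omega)
      rwa [show t + (M - t) - 2 = M - 2 by omega] at this
    have hcard : (Ioo 1 (M-1)).card = M - 2 - 1 := by rw [Nat.card_Ioo]; omega
    have hmid2 : (Ioo 1 (M-1)).card • (2 * (M-2).factorial) ≤ 3 * (M-1).factorial := by
      rw [hcard, smul_eq_mul]
      have hf : (M-1).factorial = (M-1) * (M-2).factorial := by
        rw [show M - 1 = (M-2) + 1 by omega, Nat.factorial_succ]
      rw [hf]
      calc (M - 2 - 1) * (2 * (M-2).factorial) = ((M-2-1) * 2) * (M-2).factorial := by ring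
        _ ≤ (3 * (M-1)) * (M-2).factorial := Nat.mul_le_mul_right _ (by omega)
        _ = 3 * ((M-1) * (M-2).factorial) := by ring
    rw [e1, e2]
    omega


lemma chooseMin (k : ℕ) (s : Finset ℕ) :
    s.card.choose (k+1) = ∑ t ∈ s, ((s.filter fun u => t < u).card).choose k := by
  induction s using Finset.induction_on_min with
  | empty => simp
  | insert a u ha ih =>
      have hau : a ∉ u := fun h => lt_irrefl a (ha a h)
      rw [card_insert_of_notMem hau, sum_insert hau]
      have h1 : (insert a u).filter (fun x => a < x) = u := by
        ext x
        simp only [mem_filter, mem_insert]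
        constructor
        · rintro ⟨(rfl | hx), hax⟩
          · exact absurd hax (lt_irrefl x)
          · exact hx
        · intro hx
          exact ⟨Or.inr hx, ha x hx⟩
      have h2 : ∀ t ∈ u, (insert a u).filter (fun x => t < x) = u.filter (fun x => t < x) := by
        intro t ht
        ext x
        simp only [mem_filter, mem_insert]
        constructor
        · rintro ⟨(rfl | hx), htx⟩
          · exact absurd htx (not_lt.mpr (le_of_lt (ha t ht)))
          · exact ⟨hx, htx⟩
        · rintro ⟨hx, htx⟩
          exact ⟨Or.inr hx, htx⟩
      rw [h1, Nat.choose_succ_succ,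
        sum_congr rfl (fun t ht => by rw [h2 t ht]), ← ih]

/-- The set of interior times `t` at which the permutation `τ` preserves the prefix `[0,t)`. -/
def cutSet (n : ℕ) (τ : Equiv.Perm (Fin n)) : Finset ℕ :=
  (Finset.Ioo 0 n).filter fun s => ∀ j : Fin n, ((j : ℕ) < s ↔ ((τ j : Fin n) : ℕ) < s)

lemma mem_cutSet {n : ℕ} {τ : Equiv.Perm (Fin n)} {s : ℕ} :
    s ∈ cutSet n τ ↔ (0 < s ∧ s < n) ∧ ∀ j : Fin n, ((j : ℕ) < s ↔ ((τ j : Fin n) : ℕ) < s) := by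
  simp [cutSet, mem_filter, mem_Ioo]

lemma cutSet_card_le (n : ℕ) (τ : Equiv.Perm (Fin n)) : (cutSet n τ).card ≤ n - 1 :=
  le_trans (card_filter_le _ _) (by rw [Nat.card_Ioo]; omega)

def Phi (n k : ℕ) : ℕ := ∑ τ : Equiv.Perm (Fin n), ((cutSet n τ).card).choose k

lemma Phi_zero (n : ℕ) : Phi n 0 = n.factorial := by
  simp [Phi, Finset.card_univ, Fintype.card_perm]

lemma Phi_eq_zero {n k : ℕ} (hn : 1 ≤ n) (hk : n ≤ k) : Phi n k = 0 :=
  Finset.sum_eq_zero fun τ _ =>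
    Nat.choose_eq_zero_of_lt (lt_of_le_of_lt (cutSet_card_le n τ) (by omega))

/-- the condition that `τ` preserves the prefix `[0,t)`. -/
def cutCond (n t : ℕ) (τ : Equiv.Perm (Fin n)) : Prop :=
  ∀ j : Fin n, ((j : ℕ) < t ↔ ((τ j : Fin n) : ℕ) < t)

section window

variable {n t : ℕ}

lemma cutCond_ge {τ : Equiv.Perm (Fin n)} (h : cutCond n t τ) (j : Fin n)
    (hj : ¬ ((j : ℕ) < t)) : ¬ (((τ j : Fin n) : ℕ) < t) :=
  fun hc => hj ((h j).mpr hc)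

/-- restriction of `τ` to the lower window `[0,t)`. -/
def wpLow (htn : t ≤ n) (τ : Equiv.Perm (Fin n)) (h : cutCond n t τ) : Equiv.Perm (Fin t) :=
  Equiv.ofBijective
    (fun j => ⟨((τ ⟨j.1, lt_of_lt_of_le j.2 htn⟩ : Fin n) : ℕ),
        (h ⟨j.1, lt_of_lt_of_le j.2 htn⟩).mp j.2⟩)
    (Finite.injective_iff_bijective.mp (by
      intro a b hab
      have hab0 := congrArg Fin.val hab
      have hab' : ((τ ⟨a.1, lt_of_lt_of_le a.2 htn⟩ : Fin n) : ℕ)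
          = ((τ ⟨b.1, lt_of_lt_of_le b.2 htn⟩ : Fin n) : ℕ) := hab0
      have h3 := τ.injective (Fin.ext hab')
      have h4 := congrArg Fin.val h3
      exact Fin.ext h4))

lemma wpLow_apply (htn : t ≤ n) (τ : Equiv.Perm (Fin n)) (h : cutCond n t τ) (j : Fin t) :
    ((wpLow htn τ h j : Fin t) : ℕ) = ((τ ⟨j.1, lt_of_lt_of_le j.2 htn⟩ : Fin n) : ℕ) := rfl

/-- restriction of `τ` to the upper window `[t,n)`, shifted down by `t`. -/
def wpHigh (τ : Equiv.Perm (Fin n)) (h : cutCond n t τ) : Equiv.Perm (Fin (n - t)) :=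
  Equiv.ofBijective
    (fun j => ⟨((τ ⟨j.1 + t, Nat.add_lt_of_lt_sub j.2⟩ : Fin n) : ℕ) - t, by
        have h1 := (τ ⟨j.1 + t, Nat.add_lt_of_lt_sub j.2⟩).2
        have h2 : ¬ (((τ ⟨j.1 + t, Nat.add_lt_of_lt_sub j.2⟩ : Fin n) : ℕ) < t) :=
          cutCond_ge h _ (by simp)
        omega⟩)
    (Finite.injective_iff_bijective.mp (by
      intro a b hab
      have hab0 := congrArg Fin.val hab
      have hab' : ((τ ⟨a.1 + t, Nat.add_lt_of_lt_sub a.2⟩ : Fin n) : ℕ) - t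
          = ((τ ⟨b.1 + t, Nat.add_lt_of_lt_sub b.2⟩ : Fin n) : ℕ) - t := hab0
      have h2 : ¬ (((τ ⟨a.1 + t, Nat.add_lt_of_lt_sub a.2⟩ : Fin n) : ℕ) < t) :=
        cutCond_ge h _ (by simp)
      have h3 : ¬ (((τ ⟨b.1 + t, Nat.add_lt_of_lt_sub b.2⟩ : Fin n) : ℕ) < t) :=
        cutCond_ge h _ (by simp)
      have h4 : τ ⟨a.1 + t, Nat.add_lt_of_lt_sub a.2⟩ = τ ⟨b.1 + t, Nat.add_lt_of_lt_sub b.2⟩ :=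
        Fin.ext (by omega)
      have h5 := congrArg Fin.val (τ.injective h4)
      have h6 : a.1 + t = b.1 + t := h5
      exact Fin.ext (by omega)))

lemma wpHigh_apply (τ : Equiv.Perm (Fin n)) (h : cutCond n t τ) (j : Fin (n - t)) :
    ((wpHigh τ h j : Fin (n - t)) : ℕ)
      = ((τ ⟨j.1 + t, Nat.add_lt_of_lt_sub j.2⟩ : Fin n) : ℕ) - t := rfl

def window (n t : ℕ) (htn : t ≤ n) (τ : Equiv.Perm (Fin n)) :
    Equiv.Perm (Fin t) × Equiv.Perm (Fin (n - t)) :=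
  if h : cutCond n t τ then (wpLow htn τ h, wpHigh τ h) else 1

lemma window_injOn (htn : t ≤ n) (τ₁ : Equiv.Perm (Fin n)) (h1 : cutCond n t τ₁)
    (τ₂ : Equiv.Perm (Fin n)) (h2 : cutCond n t τ₂)
    (heq : window n t htn τ₁ = window n t htn τ₂) : τ₁ = τ₂ := by
  simp only [window] at heq
  rw [dif_pos h1, dif_pos h2, Prod.mk.injEq] at heq
  obtain ⟨e1, e2⟩ := heq
  apply Equiv.ext
  intro j
  by_cases hj : (j : ℕ) < t
  · have h5 := congrArg (fun σ => ((σ ⟨j.1, hj⟩ : Fin t) : ℕ)) e1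
    rw [wpLow_apply, wpLow_apply] at h5
    exact Fin.ext h5
  · have hjn := j.2
    have hj2 : (j : ℕ) - t < n - t := by omega
    have h5 := congrArg (fun σ => ((σ ⟨(j : ℕ) - t, hj2⟩ : Fin (n - t)) : ℕ)) e2
    rw [wpHigh_apply, wpHigh_apply] at h5
    have hmk : (⟨((⟨(j : ℕ) - t, hj2⟩ : Fin (n - t)) : ℕ) + t,
        Nat.add_lt_of_lt_sub (⟨(j : ℕ) - t, hj2⟩ : Fin (n - t)).2⟩ : Fin n) = j :=
      Fin.ext (by simp; omega)
    rw [hmk] at h5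
    have g1 : ¬ (((τ₁ j : Fin n) : ℕ) < t) := cutCond_ge h1 j hj
    have g2 : ¬ (((τ₂ j : Fin n) : ℕ) < t) := cutCond_ge h2 j hj
    exact Fin.ext (by omega)

lemma cutSet_window (ht : 0 < t) (htn : t < n) (τ : Equiv.Perm (Fin n)) (h : cutCond n t τ) :
    ((cutSet n τ).filter fun s => t < s).card = (cutSet (n - t) (wpHigh τ h)).card := by
  apply Finset.card_bij' (i := fun s _ => s - t) (j := fun s _ => s + t)
  · intro s hs
    rw [mem_filter, mem_cutSet] at hs
    obtain ⟨⟨⟨h0s, hsn⟩, hcut⟩, hts⟩ := hs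
    rw [mem_cutSet]
    refine ⟨⟨by omega, by omega⟩, ?_⟩
    intro j'
    rw [wpHigh_apply]
    have hc := hcut ⟨j'.1 + t, Nat.add_lt_of_lt_sub j'.2⟩
    have hge : ¬ (((τ ⟨j'.1 + t, Nat.add_lt_of_lt_sub j'.2⟩ : Fin n) : ℕ) < t) :=
      cutCond_ge h _ (by simp)
    simp only [] at hc ⊢
    omega
  · intro s' hs'
    rw [mem_cutSet] at hs'
    obtain ⟨⟨h0s, hsn⟩, hcut'⟩ := hs'
    rw [mem_filter, mem_cutSet]
    refine ⟨⟨⟨by omega, by omega⟩, ?_⟩, by omega⟩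
    intro j
    by_cases hjt : (j : ℕ) < t
    · have hlt : ((τ j : Fin n) : ℕ) < t := (h j).mp hjt
      constructor <;> intro <;> omega
    · have hjn := j.2
      have hj2 : (j : ℕ) - t < n - t := by omega
      have hc := hcut' ⟨(j : ℕ) - t, hj2⟩
      rw [wpHigh_apply] at hc
      have hmk : (⟨((⟨(j : ℕ) - t, hj2⟩ : Fin (n - t)) : ℕ) + t,
          Nat.add_lt_of_lt_sub (⟨(j : ℕ) - t, hj2⟩ : Fin (n - t)).2⟩ : Fin n) = j :=
        Fin.ext (by simp; omega)
      rw [hmk] at hc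
      have hge : ¬ (((τ j : Fin n) : ℕ) < t) := cutCond_ge h j hjt
      simp only [] at hc
      omega
  · intro s hs
    rw [mem_filter] at hs
    have := hs.2
    omega
  · intro s' _
    omega

end window

lemma Phi_succ_le (n k : ℕ) : Phi n (k+1) ≤ ∑ t ∈ Ioo 0 n, t.factorial * Phi (n - t) k := by
  have step1 : Phi n (k+1)
      = ∑ τ : Equiv.Perm (Fin n), ∑ t ∈ Ioo 0 n,
          if cutCond n t τ then (((cutSet n τ).filter fun u => t < u).card).choose k else 0 := by
    apply Finset.sum_congr rfl
    intro τ _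
    rw [chooseMin k (cutSet n τ)]
    rw [cutSet, Finset.sum_filter]
    apply Finset.sum_congr rfl
    intro t _
    exact if_congr Iff.rfl rfl rfl
  rw [step1, Finset.sum_comm]
  apply Finset.sum_le_sum
  intro t ht
  rw [mem_Ioo] at ht
  have htn : t ≤ n := le_of_lt ht.2
  calc ∑ τ : Equiv.Perm (Fin n),
        (if cutCond n t τ then (((cutSet n τ).filter fun u => t < u).card).choose k else 0)
      = ∑ τ ∈ univ.filter (fun τ => cutCond n t τ),
          (((cutSet n τ).filter fun u => t < u).card).choose k := (Finset.sum_filter _ _).symm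
    _ = ∑ τ ∈ univ.filter (fun τ => cutCond n t τ),
          ((cutSet (n - t) ((window n t htn τ).2)).card).choose k := by
        apply Finset.sum_congr rfl
        intro τ hτ
        have hcc : cutCond n t τ := (Finset.mem_filter.mp hτ).2
        rw [window, dif_pos hcc]
        rw [cutSet_window ht.1 ht.2 τ hcc]
    _ = ∑ p ∈ (univ.filter (fun τ => cutCond n t τ)).image (window n t htn),
          ((cutSet (n - t) p.2).card).choose k := by
        rw [Finset.sum_image]
        intro τ₁ hτ₁ τ₂ hτ₂ heq
        exact window_injOn htn τ₁ (Finset.mem_filter.mp hτ₁).2 τ₂ (Finset.mem_filter.mp hτ₂).2 heq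
    _ ≤ ∑ p : Equiv.Perm (Fin t) × Equiv.Perm (Fin (n - t)),
          ((cutSet (n - t) p.2).card).choose k :=
        Finset.sum_le_sum_of_subset (Finset.subset_univ _)
    _ = t.factorial * Phi (n - t) k := by
        rw [Fintype.sum_prod_type]
        simp only [Finset.sum_const, Finset.card_univ, smul_eq_mul]
        rw [Fintype.card_perm, Fintype.card_fin]
        rfl

lemma Phi_le : ∀ k n : ℕ, Phi n k ≤ (k+1) * 5^k * (n - k).factorial := by
  intro k
  induction k with
  | zero =>
      intro n
      rw [Phi_zero]
      simp
  | succ k ih =>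
      intro n
      calc Phi n (k+1) ≤ ∑ t ∈ Ioo 0 n, t.factorial * Phi (n - t) k := Phi_succ_le n k
        _ = ∑ t ∈ Ioo 0 (n - k), t.factorial * Phi (n - t) k := by
            refine (Finset.sum_subset (Finset.Ioo_subset_Ioo le_rfl (by omega)) ?_).symm
            intro x hx hx'
            rw [mem_Ioo] at hx
            have hx2 : n - k ≤ x := by
              by_contra hc
              exact hx' (mem_Ioo.mpr ⟨hx.1, by omega⟩)
            rw [Phi_eq_zero (by omega) (by omega), mul_zero]
        _ ≤ ∑ t ∈ Ioo 0 (n - k), t.factorial * ((k+1) * 5^k * ((n - t) - k).factorial) :=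
            Finset.sum_le_sum fun t _ => Nat.mul_le_mul_left _ (ih (n - t))
        _ = (k+1) * 5^k * ∑ t ∈ Ioo 0 (n - k), t.factorial * ((n - k) - t).factorial := by
            rw [Finset.mul_sum]
            apply Finset.sum_congr rfl
            intro t ht
            rw [mem_Ioo] at ht
            rw [show n - t - k = n - k - t by omega]
            ring
        _ ≤ (k+1) * 5^k * (5 * ((n - k) - 1).factorial) :=
            Nat.mul_le_mul_left _ (sum_fact_aux (n - k))
        _ ≤ (k+1+1) * 5^(k+1) * (n - (k+1)).factorial := by
            rw [show n - k - 1 = n - (k+1) by omega]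
            calc (k+1) * 5^k * (5 * (n - (k+1)).factorial)
                = ((k+1) * 5^(k+1)) * (n - (k+1)).factorial := by ring
              _ ≤ ((k+1+1) * 5^(k+1)) * (n - (k+1)).factorial :=
                  Nat.mul_le_mul_right _ (Nat.mul_le_mul_right _ (by omega))


/-- the product weight of a configuration -/
def wfun (n : ℕ) (e : ℝ) (ρ : (Fin n → Bool) → Bool) : ℝ :=
  ∏ v : Fin n → Bool, (if ρ v then e else 1 - e)

lemma percMeasure_isProb (n : ℕ) (ε : ℝ≥0∞) (h : ε ≤ 1) :
    IsProbabilityMeasure (percMeasure n ε h) := by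
  unfold percMeasure
  infer_instance

lemma perc_singleton (n : ℕ) (e : ℝ) (he0 : 0 ≤ e) (he1 : e ≤ 1) (h : ENNReal.ofReal e ≤ 1)
    (ρ : (Fin n → Bool) → Bool) :
    ((percMeasure n (ENNReal.ofReal e) h) {ρ}).toReal = wfun n e ρ := by
  rw [percMeasure, ← Set.univ_pi_singleton ρ, Measure.pi_pi, ENNReal.toReal_prod, wfun]
  apply Finset.prod_congr rfl
  intro v _
  rw [PMF.toMeasure_apply_singleton _ _ (measurableSet_singleton _)]
  erw [PMF.bernoulli_apply]
  cases hv : ρ v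
  · simp only [cond_false]
    rw [show (ENNReal.ofReal e).toNNReal = e.toNNReal from rfl, ENNReal.coe_toReal, NNReal.coe_sub (Real.toNNReal_le_one.mpr he1), Real.coe_toNNReal _ he0]
    simp
  · simp only [cond_true]
    rw [show (ENNReal.ofReal e).toNNReal = e.toNNReal from rfl, ENNReal.coe_toReal, Real.coe_toNNReal _ he0]
    simp

lemma sum_w_ind (n : ℕ) (e : ℝ) (he0 : 0 ≤ e) (V : Finset (Fin n → Bool)) :
    ∑ ρ : (Fin n → Bool) → Bool,
      wfun n e ρ * (if (∀ v ∈ V, ρ v = true) then (1:ℝ) else 0) = e ^ V.card := by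
  have hrw : ∀ ρ : (Fin n → Bool) → Bool,
      wfun n e ρ * (if (∀ v ∈ V, ρ v = true) then (1:ℝ) else 0)
      = ∏ v : Fin n → Bool,
          ((if ρ v then e else 1 - e) * (if v ∈ V then (if ρ v then (1:ℝ) else 0) else 1)) := by
    intro ρ
    rw [Finset.prod_mul_distrib]
    congr 1
    rw [Finset.prod_ite_mem univ V (fun v => if ρ v then (1:ℝ) else 0), Finset.univ_inter,
      Finset.prod_boole]
    split_ifs <;> rfl
  rw [Finset.sum_congr rfl (fun ρ _ => hrw ρ)]
  have hfact := Finset.prod_univ_sum (fun _ : Fin n → Bool => (univ : Finset Bool))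
    (fun v b => (if b then e else 1 - e) * (if v ∈ V then (if b then (1:ℝ) else 0) else 1))
  rw [Fintype.piFinset_univ] at hfact
  rw [← hfact]
  have hsum : ∀ v : Fin n → Bool,
      (∑ b : Bool, ((if b then e else 1 - e) * (if v ∈ V then (if b then (1:ℝ) else 0) else 1)))
      = (if v ∈ V then e else 1) := by
    intro v
    rw [Fintype.sum_bool]
    by_cases hv : v ∈ V <;> simp [hv]
  rw [Finset.prod_congr rfl (fun v _ => hsum v),
    Finset.prod_ite_mem univ V (fun _ => e), Finset.univ_inter, Finset.prod_const]

/-- the set of interior vertices of the path of `π` -/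
def Iset (n : ℕ) (π : Equiv.Perm (Fin n)) : Finset (Fin n → Bool) :=
  (Finset.Ioo 0 n).image (pathVertex n π)

lemma numOpen_cast (n : ℕ) (ρ : (Fin n → Bool) → Bool) :
    (numOpen n ρ : ℝ)
      = ∑ π : Equiv.Perm (Fin n), (if (∀ v ∈ Iset n π, ρ v = true) then (1:ℝ) else 0) := by
  rw [numOpen, Finset.card_filter]
  push_cast
  apply Finset.sum_congr rfl
  intro π _
  refine if_congr ?_ rfl rfl
  constructor
  · intro hcond v hv
    obtain ⟨t, ht, rfl⟩ := Finset.mem_image.mp hv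
    exact hcond t ht
  · intro hcond t ht
    exact hcond _ (Finset.mem_image.mpr ⟨t, ht, rfl⟩)

lemma filter_val_lt_card (n t : ℕ) (htn : t ≤ n) :
    (Finset.univ.filter fun j : Fin n => (j : ℕ) < t).card = t := by
  conv_rhs => rw [← Finset.card_range t]
  apply Finset.card_bij' (fun (j : Fin n) _ => (j : ℕ))
    (fun m hm => (⟨m, lt_of_lt_of_le (Finset.mem_range.mp hm) htn⟩ : Fin n))
  case hi =>
    intro a ha
    rw [Finset.mem_range]
    exact (Finset.mem_filter.mp ha).2
  case hj =>
    intro m hm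
    rw [Finset.mem_filter]
    refine ⟨Finset.mem_univ _, ?_⟩
    simpa using Finset.mem_range.mp hm
  case left_inv =>
    intro a _
    rfl
  case right_inv =>
    intro m _
    rfl

lemma pathVertex_count (n : ℕ) (π : Equiv.Perm (Fin n)) (t : ℕ) (htn : t ≤ n) :
    (Finset.univ.filter fun i : Fin n => pathVertex n π t i = true).card = t := by
  conv_rhs => rw [← filter_val_lt_card n t htn]
  apply Finset.card_equiv π.symm
  intro i
  simp [pathVertex]

lemma pathVertex_inj (n : ℕ) (π σ : Equiv.Perm (Fin n)) (t s : ℕ) (ht : t ≤ n) (hs : s ≤ n)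
    (heq : pathVertex n π t = pathVertex n σ s) : t = s := by
  have h1 := pathVertex_count n π t ht
  have h2 := pathVertex_count n σ s hs
  rw [heq] at h1
  rw [← h1]
  exact h2

lemma Iset_card (n : ℕ) (π : Equiv.Perm (Fin n)) : (Iset n π).card = n - 1 := by
  have hinj : Set.InjOn (pathVertex n π) ↑(Finset.Ioo 0 n) := by
    intro t ht s hs heq
    rw [Finset.coe_Ioo, Set.mem_Ioo] at ht hs
    exact pathVertex_inj n π π t s (le_of_lt ht.2) (le_of_lt hs.2) heq
  rw [Iset, Finset.card_image_of_injOn hinj, Nat.card_Ioo]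
  omega

/-- agreement times of two paths -/
def agreeSet (n : ℕ) (π σ : Equiv.Perm (Fin n)) : Finset ℕ :=
  (Finset.Ioo 0 n).filter fun t => pathVertex n π t = pathVertex n σ t

lemma inter_eq_image_agree (n : ℕ) (π σ : Equiv.Perm (Fin n)) :
    Iset n π ∩ Iset n σ = (agreeSet n π σ).image (pathVertex n π) := by
  ext v
  simp only [Finset.mem_inter, Iset, agreeSet, Finset.mem_image, Finset.mem_filter]
  constructor
  · rintro ⟨⟨t, ht, rfl⟩, ⟨s, hs, heqs⟩⟩
    rw [Finset.mem_Ioo] at ht hs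
    have : s = t := pathVertex_inj n σ π s t (le_of_lt hs.2) (le_of_lt ht.2) heqs
    subst this
    exact ⟨s, ⟨Finset.mem_Ioo.mpr ht, heqs.symm⟩, rfl⟩
  · rintro ⟨t, ⟨ht, heq⟩, rfl⟩
    exact ⟨⟨t, ht, rfl⟩, ⟨t, ht, heq.symm⟩⟩

lemma inter_card (n : ℕ) (π σ : Equiv.Perm (Fin n)) :
    (Iset n π ∩ Iset n σ).card = (agreeSet n π σ).card := by
  rw [inter_eq_image_agree]
  apply Finset.card_image_of_injOn
  intro t ht s hs heq
  rw [agreeSet, Finset.coe_filter, Set.mem_setOf_eq, Finset.mem_Ioo] at ht hs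
  exact pathVertex_inj n π π t s (le_of_lt ht.1.2) (le_of_lt hs.1.2) heq

lemma union_card (n : ℕ) (π σ : Equiv.Perm (Fin n)) :
    (Iset n π ∪ Iset n σ).card + (agreeSet n π σ).card = 2 * (n - 1) := by
  rw [← inter_card n π σ, Finset.card_union_add_card_inter, Iset_card, Iset_card]
  ring

lemma agreeSet_eq_cutSet (n : ℕ) (π σ : Equiv.Perm (Fin n)) :
    agreeSet n π σ = cutSet n (π.trans σ.symm) := by
  ext t
  simp only [agreeSet, cutSet, Finset.mem_filter]
  refine and_congr_right fun _ => ?_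
  rw [funext_iff]
  constructor
  · intro H j
    have := H (π j)
    simp only [pathVertex, decide_eq_decide, Equiv.symm_apply_apply] at this
    simpa [Equiv.trans_apply] using this
  · intro H i
    have := H (π.symm i)
    simp only [Equiv.trans_apply, Equiv.apply_symm_apply] at this
    simp only [pathVertex, decide_eq_decide]
    exact this

lemma sum_sigma_reindex (n : ℕ) (π : Equiv.Perm (Fin n)) (F : Equiv.Perm (Fin n) → ℝ) :
    ∑ σ : Equiv.Perm (Fin n), F (π.trans σ.symm) = ∑ τ : Equiv.Perm (Fin n), F τ := by
  apply Fintype.sum_bijective (fun σ : Equiv.Perm (Fin n) => π.trans σ.symm)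
  · constructor
    · intro σ₁ σ₂ h
      have hsymm : σ₁.symm = σ₂.symm := by
        apply Equiv.ext
        intro i
        have := congrArg (fun τ => τ (π.symm i)) h
        simpa [Equiv.trans_apply, Equiv.apply_symm_apply] using this
      have := congrArg Equiv.symm hsymm
      simpa using this
    · intro τ
      refine ⟨(π.symm.trans τ).symm, ?_⟩
      ext x
      simp [Equiv.trans_apply]
  · intro σ
    rfl


lemma wfun_nonneg (n : ℕ) (e : ℝ) (he0 : 0 ≤ e) (he1 : e ≤ 1) (ρ : (Fin n → Bool) → Bool) :
    0 ≤ wfun n e ρ :=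
  Finset.prod_nonneg fun v _ => by split_ifs <;> linarith

lemma sum_w_one (n : ℕ) (e : ℝ) (he0 : 0 ≤ e) :
    ∑ ρ : (Fin n → Bool) → Bool, wfun n e ρ = 1 := by
  have := sum_w_ind n e he0 ∅
  simpa using this

lemma sum_w_Y (n : ℕ) (e : ℝ) (he0 : 0 ≤ e) :
    ∑ ρ : (Fin n → Bool) → Bool, wfun n e ρ * (numOpen n ρ : ℝ)
      = (n.factorial : ℝ) * e ^ (n - 1) := by
  have h1 : ∀ ρ : (Fin n → Bool) → Bool, wfun n e ρ * (numOpen n ρ : ℝ)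
      = ∑ π : Equiv.Perm (Fin n),
          wfun n e ρ * (if (∀ v ∈ Iset n π, ρ v = true) then (1:ℝ) else 0) := by
    intro ρ
    rw [numOpen_cast, Finset.mul_sum]
  rw [Finset.sum_congr rfl (fun ρ _ => h1 ρ), Finset.sum_comm]
  rw [Finset.sum_congr rfl (fun π _ => sum_w_ind n e he0 (Iset n π))]
  rw [Finset.sum_congr rfl (fun π _ => by rw [Iset_card n π])]
  rw [Finset.sum_const, Finset.card_univ, Fintype.card_perm, Fintype.card_fin, nsmul_eq_mul]

lemma sum_w_Y2 (n : ℕ) (e : ℝ) (he0 : 0 ≤ e) :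
    ∑ ρ : (Fin n → Bool) → Bool, wfun n e ρ * (numOpen n ρ : ℝ)^2
      = ∑ π : Equiv.Perm (Fin n), ∑ σ : Equiv.Perm (Fin n),
          e ^ ((Iset n π ∪ Iset n σ).card) := by
  have h1 : ∀ ρ : (Fin n → Bool) → Bool, wfun n e ρ * (numOpen n ρ : ℝ)^2
      = ∑ π : Equiv.Perm (Fin n), ∑ σ : Equiv.Perm (Fin n),
          wfun n e ρ * (if (∀ v ∈ Iset n π ∪ Iset n σ, ρ v = true) then (1:ℝ) else 0) := by
    intro ρ
    rw [pow_two, numOpen_cast, Finset.sum_mul_sum, Finset.mul_sum]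
    apply Finset.sum_congr rfl
    intro π _
    rw [Finset.mul_sum]
    apply Finset.sum_congr rfl
    intro σ _
    by_cases hπ : ∀ v ∈ Iset n π, ρ v = true
    · by_cases hσ : ∀ v ∈ Iset n σ, ρ v = true
      · rw [if_pos hπ, if_pos hσ, if_pos (Finset.forall_mem_union.mpr ⟨hπ, hσ⟩)]
        ring
      · rw [if_neg hσ, if_neg (fun hc => hσ (Finset.forall_mem_union.mp hc).2)]
        ring
    · rw [if_neg hπ, if_neg (fun hc => hπ (Finset.forall_mem_union.mp hc).1)]
      ring
  rw [Finset.sum_congr rfl (fun ρ _ => h1 ρ), Finset.sum_comm]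
  apply Finset.sum_congr rfl
  intro π _
  rw [Finset.sum_comm]
  apply Finset.sum_congr rfl
  intro σ _
  exact sum_w_ind n e he0 (Iset n π ∪ Iset n σ)

lemma sum_w_Y2_eq (n : ℕ) (e : ℝ) (he0 : 0 < e) (he1 : e ≤ 1) :
    ∑ ρ : (Fin n → Bool) → Bool, wfun n e ρ * (numOpen n ρ : ℝ)^2
      = (n.factorial : ℝ) * (e ^ (2*(n-1))
          * ∑ τ : Equiv.Perm (Fin n), ((1:ℝ)/e) ^ ((cutSet n τ).card)) := by
  rw [sum_w_Y2 n e he0.le]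
  have hkey : ∀ π σ : Equiv.Perm (Fin n), (e:ℝ) ^ ((Iset n π ∪ Iset n σ).card)
      = e^(2*(n-1)) * ((1:ℝ)/e) ^ ((cutSet n (π.trans σ.symm)).card) := by
    intro π σ
    have hc := union_card n π σ
    rw [agreeSet_eq_cutSet] at hc
    have hne : (e:ℝ) ^ ((cutSet n (π.trans σ.symm)).card) ≠ 0 := pow_ne_zero _ (ne_of_gt he0)
    rw [one_div, inv_pow, ← hc, pow_add]
    field_simp
  rw [Finset.sum_congr rfl (fun π _ => Finset.sum_congr rfl (fun σ _ => hkey π σ))]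
  rw [Finset.sum_congr rfl (fun π _ => sum_sigma_reindex n π
    (fun τ => e^(2*(n-1)) * ((1:ℝ)/e) ^ ((cutSet n τ).card)))]
  rw [Finset.sum_const, Finset.card_univ, Fintype.card_perm, Fintype.card_fin, nsmul_eq_mul]
  rw [← Finset.mul_sum]

lemma sum_cut_expand (n : ℕ) (hn : 1 ≤ n) (e : ℝ) (he0 : 0 < e) :
    ∑ τ : Equiv.Perm (Fin n), ((1:ℝ)/e) ^ ((cutSet n τ).card)
      = ∑ k ∈ Finset.range n, ((1-e)/e)^k * (Phi n k : ℝ) := by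
  have hper : ∀ τ : Equiv.Perm (Fin n), ((1:ℝ)/e) ^ ((cutSet n τ).card)
      = ∑ k ∈ Finset.range n, ((1-e)/e)^k * (((cutSet n τ).card).choose k : ℝ) := by
    intro τ
    have hA : (cutSet n τ).card ≤ n - 1 := cutSet_card_le n τ
    have h1e : (1:ℝ)/e = (1-e)/e + 1 := by field_simp; ring
    rw [h1e, add_pow]
    simp only [one_pow, mul_one]
    apply Finset.sum_subset
    · apply Finset.range_subset_range.mpr
      omega
    · intro k hk hk2
      have hlt : (cutSet n τ).card < k := by
        rw [Finset.mem_range, not_lt] at hk2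
        omega
      rw [Nat.choose_eq_zero_of_lt hlt]
      simp
  rw [Finset.sum_congr rfl (fun τ _ => hper τ), Finset.sum_comm]
  apply Finset.sum_congr rfl
  intro k _
  rw [← Finset.mul_sum, Phi, Nat.cast_sum]

lemma expr_eq (n : ℕ) (hn : 1 ≤ n) (e : ℝ) (he0 : 0 < e) (he1 : e ≤ 1) :
    ((∑ ρ : (Fin n → Bool) → Bool, wfun n e ρ * (numOpen n ρ : ℝ)^2)
        - ((n.factorial:ℝ) * e^(n-1))^2) / ((n.factorial:ℝ) * e^(n-1))^2
      = (∑ k ∈ Finset.Ico 1 n, ((1-e)/e)^k * (Phi n k : ℝ)) / (n.factorial : ℝ) := by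
  have hfac : (0:ℝ) < (n.factorial : ℝ) := by exact_mod_cast n.factorial_pos
  have hepow : (0:ℝ) < e^(n-1) := pow_pos he0 _
  rw [sum_w_Y2_eq n e he0 he1, sum_cut_expand n hn e he0]
  have hsplit : ∑ k ∈ Finset.range n, ((1-e)/e)^k * (Phi n k : ℝ)
      = (n.factorial : ℝ) + ∑ k ∈ Finset.Ico 1 n, ((1-e)/e)^k * (Phi n k : ℝ) := by
    rw [Finset.range_eq_Ico, Finset.sum_eq_sum_Ico_succ_bot (by omega : 0 < n)]
    rw [Phi_zero]
    simp
  rw [hsplit]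
  have h2 : ((n.factorial:ℝ) * e^(n-1))^2 = (n.factorial:ℝ)^2 * e^(2*(n-1)) := by
    rw [mul_pow, ← pow_mul, Nat.mul_comm]
  rw [h2]
  have he2 : (0:ℝ) < e^(2*(n-1)) := pow_pos he0 _
  field_simp
  ring



lemma integral_eq_sum (n : ℕ) (e : ℝ) (he0 : 0 ≤ e) (he1 : e ≤ 1) (h : ENNReal.ofReal e ≤ 1)
    (f : ((Fin n → Bool) → Bool) → ℝ) :
    ∫ ρ, f ρ ∂(percMeasure n (ENNReal.ofReal e) h)
      = ∑ ρ : (Fin n → Bool) → Bool, wfun n e ρ * f ρ := by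
  haveI := percMeasure_isProb n (ENNReal.ofReal e) h
  rw [MeasureTheory.integral_fintype (Integrable.of_finite)]
  apply Finset.sum_congr rfl
  intro ρ _
  rw [smul_eq_mul, Measure.real, perc_singleton n e he0 he1 h ρ]

lemma measure_set_toReal (n : ℕ) (e : ℝ) (he0 : 0 ≤ e) (he1 : e ≤ 1)
    (h : ENNReal.ofReal e ≤ 1) (S : Finset ((Fin n → Bool) → Bool)) :
    ((percMeasure n (ENNReal.ofReal e) h) ↑S).toReal = ∑ ρ ∈ S, wfun n e ρ := by
  haveI := percMeasure_isProb n (ENNReal.ofReal e) h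
  have hU : (↑S : Set ((Fin n → Bool) → Bool)) = ⋃ ρ ∈ S, {ρ} := by
    ext y
    simp
  rw [hU, measure_biUnion_finset ?hd ?hm]
  case hd =>
    intro a _ b _ hab
    simp only [Function.onFun, Set.disjoint_singleton_left, Set.mem_singleton_iff]
    exact hab
  case hm =>
    intro b _
    exact measurableSet_singleton b
  rw [ENNReal.toReal_sum (fun ρ _ => measure_ne_top _ _)]
  exact Finset.sum_congr rfl fun ρ _ => perc_singleton n e he0 he1 h ρ

lemma chebyshev (n : ℕ) (e : ℝ) (he0 : 0 < e) (he1 : e ≤ 1) (h : ENNReal.ofReal e ≤ 1)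
    (δ : ℝ) (hδ : 0 < δ) :
    ((percMeasure n (ENNReal.ofReal e) h)
        {ρ | δ < |(numOpen n ρ : ℝ) / ((n.factorial : ℝ) * e^(n-1)) - 1|}).toReal
      ≤ (((∑ ρ : (Fin n → Bool) → Bool, wfun n e ρ * (numOpen n ρ : ℝ)^2)
            - ((n.factorial:ℝ) * e^(n-1))^2) / ((n.factorial:ℝ) * e^(n-1))^2) / δ^2 := by
  set E : ℝ := (n.factorial : ℝ) * e^(n-1) with hE
  have hEpos : 0 < E := mul_pos (by exact_mod_cast n.factorial_pos) (pow_pos he0 _)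
  set S : Finset ((Fin n → Bool) → Bool) :=
    univ.filter (fun ρ => δ < |(numOpen n ρ : ℝ)/E - 1|) with hS
  have hset : {ρ : (Fin n → Bool) → Bool | δ < |(numOpen n ρ : ℝ)/E - 1|} = (↑S : Set _) := by
    ext ρ
    simp [hS]
  rw [hset, measure_set_toReal n e he0.le he1 h S]
  have step1 : ∑ ρ ∈ S, wfun n e ρ
      ≤ ∑ ρ ∈ S, wfun n e ρ * (((numOpen n ρ : ℝ)/E - 1)^2 / δ^2) := by
    apply Finset.sum_le_sum
    intro ρ hρ
    have hmem : δ < |(numOpen n ρ : ℝ)/E - 1| := (Finset.mem_filter.mp hρ).2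
    have h1 : δ^2 ≤ ((numOpen n ρ : ℝ)/E - 1)^2 := by
      rw [← sq_abs ((numOpen n ρ : ℝ)/E - 1)]
      exact pow_le_pow_left₀ hδ.le (le_of_lt hmem) 2
    have h2 : (1:ℝ) ≤ ((numOpen n ρ : ℝ)/E - 1)^2 / δ^2 :=
      (one_le_div (by positivity)).mpr h1
    calc wfun n e ρ = wfun n e ρ * 1 := (mul_one _).symm
      _ ≤ wfun n e ρ * (((numOpen n ρ : ℝ)/E - 1)^2 / δ^2) :=
        mul_le_mul_of_nonneg_left h2 (wfun_nonneg n e he0.le he1 ρ)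
  have step2 : ∑ ρ ∈ S, wfun n e ρ * (((numOpen n ρ : ℝ)/E - 1)^2 / δ^2)
      ≤ ∑ ρ : (Fin n → Bool) → Bool, wfun n e ρ * (((numOpen n ρ : ℝ)/E - 1)^2 / δ^2) := by
    apply Finset.sum_le_sum_of_subset_of_nonneg (Finset.subset_univ _)
    intro ρ _ _
    have := wfun_nonneg n e he0.le he1 ρ
    positivity
  have step3 : ∑ ρ : (Fin n → Bool) → Bool, wfun n e ρ * (((numOpen n ρ : ℝ)/E - 1)^2 / δ^2)
      = (((∑ ρ : (Fin n → Bool) → Bool, wfun n e ρ * (numOpen n ρ : ℝ)^2) - E^2) / E^2) / δ^2 := by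
    have expand : ∀ ρ : (Fin n → Bool) → Bool,
        wfun n e ρ * (((numOpen n ρ : ℝ)/E - 1)^2 / δ^2)
        = (wfun n e ρ * (numOpen n ρ : ℝ)^2) / E^2 / δ^2
            - 2 * (wfun n e ρ * (numOpen n ρ : ℝ)) / E / δ^2
            + wfun n e ρ / δ^2 := by
      intro ρ
      field_simp
      ring
    rw [Finset.sum_congr rfl (fun ρ _ => expand ρ)]
    rw [Finset.sum_add_distrib, Finset.sum_sub_distrib]
    rw [← Finset.sum_div, ← Finset.sum_div, ← Finset.sum_div, ← Finset.sum_div,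
      ← Finset.mul_sum, ← Finset.sum_div]
    rw [sum_w_Y n e he0.le, ← hE, sum_w_one n e he0.le]
    field_simp
    ring
  calc ∑ ρ ∈ S, wfun n e ρ
      ≤ ∑ ρ : (Fin n → Bool) → Bool, wfun n e ρ * (((numOpen n ρ : ℝ)/E - 1)^2 / δ^2) :=
        le_trans step1 step2
    _ = _ := step3



lemma succ_pow_le_three_mul (k : ℕ) : ((k:ℝ)+1)^k ≤ 3 * (k:ℝ)^k := by
  rcases Nat.eq_zero_or_pos k with rfl | hk
  · norm_num
  · have hkpos : (0:ℝ) < k := by exact_mod_cast hk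
    have h1 : (k:ℝ) + 1 = k * (1 + 1/k) := by field_simp
    rw [h1, mul_pow]
    have h2 : (1 + 1/(k:ℝ))^k ≤ 3 := by
      have h3 : (1 + 1/(k:ℝ)) ≤ Real.exp (1/k) := by
        have := Real.add_one_le_exp (1/(k:ℝ))
        linarith
      have h4 : (1 + 1/(k:ℝ))^k ≤ (Real.exp (1/k))^k :=
        pow_le_pow_left₀ (by positivity) h3 k
      have h5 : (Real.exp (1/(k:ℝ)))^k = Real.exp 1 := by
        rw [← Real.exp_nat_mul]
        congr 1
        field_simp
      rw [h5] at h4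
      have h6 : Real.exp 1 ≤ 3 := by
        have := Real.exp_one_lt_d9
        linarith
      linarith
    calc (k:ℝ)^k * (1 + 1/(k:ℝ))^k ≤ (k:ℝ)^k * 3 :=
          mul_le_mul_of_nonneg_left h2 (by positivity)
      _ = 3 * (k:ℝ)^k := by ring

lemma pow_le_three_pow_mul_factorial (k : ℕ) : (k:ℝ)^k ≤ 3^k * (k.factorial : ℝ) := by
  induction k with
  | zero => norm_num
  | succ k ih =>
      have h1 : ((k:ℝ)+1)^(k+1) = ((k:ℝ)+1) * ((k:ℝ)+1)^k := by rw [pow_succ]; ring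
      have h2 : ((k:ℝ)+1)^k ≤ 3 * (k:ℝ)^k := succ_pow_le_three_mul k
      have hk1 : (0:ℝ) ≤ (k:ℝ)+1 := by positivity
      calc ((k+1:ℕ):ℝ)^(k+1) = ((k:ℝ)+1) * ((k:ℝ)+1)^k := by push_cast; rw [h1]
        _ ≤ ((k:ℝ)+1) * (3 * (k:ℝ)^k) := mul_le_mul_of_nonneg_left h2 hk1
        _ ≤ ((k:ℝ)+1) * (3 * (3^k * (k.factorial : ℝ))) := by
            apply mul_le_mul_of_nonneg_left _ hk1
            apply mul_le_mul_of_nonneg_left ih (by norm_num)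
        _ = 3^(k+1) * (((k:ℝ)+1) * (k.factorial : ℝ)) := by ring
        _ = 3^(k+1) * ((k+1).factorial : ℝ) := by
            rw [Nat.factorial_succ]
            push_cast
            ring

lemma fact_ratio_bound (n k : ℕ) (hk1 : 1 ≤ k) (hkn : k ≤ n) :
    ((n-k).factorial : ℝ) * (n:ℝ)^k ≤ 6^k * (n.factorial : ℝ) := by
  rcases le_or_gt (2*k) n with hcase | hcase
  · -- small k : use descFactorial
    have hd : (n + 1 - k)^k ≤ n.descFactorial k := Nat.pow_sub_le_descFactorial n k
    have hn2 : n ≤ 2 * (n + 1 - k) := by omega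
    have h1 : n^k ≤ 2^k * n.descFactorial k := by
      calc n^k ≤ (2 * (n + 1 - k))^k := Nat.pow_le_pow_left hn2 k
        _ = 2^k * (n + 1 - k)^k := by rw [mul_pow]
        _ ≤ 2^k * n.descFactorial k := Nat.mul_le_mul_left _ hd
    have h2 : (n-k).factorial * n^k ≤ 2^k * n.factorial := by
      calc (n-k).factorial * n^k ≤ (n-k).factorial * (2^k * n.descFactorial k) :=
            Nat.mul_le_mul_left _ h1
        _ = 2^k * ((n-k).factorial * n.descFactorial k) := by ring
        _ = 2^k * n.factorial := by rw [Nat.factorial_mul_descFactorial hkn]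
    have h2' : ((n-k).factorial * n^k : ℝ) ≤ (2^k * n.factorial : ℝ) := by exact_mod_cast h2
    push_cast at h2'
    calc ((n-k).factorial : ℝ) * (n:ℝ)^k ≤ 2^k * (n.factorial : ℝ) := h2'
      _ ≤ 6^k * (n.factorial : ℝ) := by
          apply mul_le_mul_of_nonneg_right _ (by positivity)
          apply pow_le_pow_left₀ (by norm_num) (by norm_num)
  · -- large k : use k!
    have hfk : ((n-k).factorial : ℝ) * (k.factorial : ℝ) ≤ (n.factorial : ℝ) := by
      have hd : (n-k).factorial * k.factorial ∣ n.factorial := by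
        have := Nat.factorial_mul_factorial_dvd_factorial_add (n-k) k
        rwa [show n - k + k = n by omega] at this
      exact_mod_cast Nat.le_of_dvd n.factorial_pos hd
    have hnk : (n:ℝ) ≤ 2 * k := by exact_mod_cast (by omega : n ≤ 2*k)
    have h1 : (n:ℝ)^k ≤ (2*(k:ℝ))^k := pow_le_pow_left₀ (by positivity) hnk k
    have h2 : ((2:ℝ)*(k:ℝ))^k = 2^k * (k:ℝ)^k := by rw [mul_pow]
    have h3 : (n:ℝ)^k ≤ 2^k * (3^k * (k.factorial : ℝ)) := by
      calc (n:ℝ)^k ≤ 2^k * (k:ℝ)^k := by rw [← h2]; exact h1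
        _ ≤ 2^k * (3^k * (k.factorial : ℝ)) :=
            mul_le_mul_of_nonneg_left (pow_le_three_pow_mul_factorial k) (by positivity)
    calc ((n-k).factorial : ℝ) * (n:ℝ)^k
        ≤ ((n-k).factorial : ℝ) * (2^k * (3^k * (k.factorial : ℝ))) :=
          mul_le_mul_of_nonneg_left h3 (by positivity)
      _ = 6^k * (((n-k).factorial : ℝ) * (k.factorial : ℝ)) := by
          rw [show ((6:ℝ))^k = 2^k * 3^k by rw [← mul_pow]; norm_num]
          ring
      _ ≤ 6^k * (n.factorial : ℝ) := mul_le_mul_of_nonneg_left hfk (by positivity)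

lemma half_sum : ∀ m : ℕ, 1 ≤ m →
    ∑ k ∈ Finset.Ico 1 m, ((k:ℝ)+1)*(1/2)^(k-1) = 6 - (2*(m:ℝ)+4)*(1/2)^(m-1) := by
  intro m hm
  induction m, hm using Nat.le_induction with
  | base => norm_num
  | succ m hm ih =>
      rw [Finset.sum_Ico_succ_top hm, ih]
      obtain ⟨m', rfl⟩ : ∃ m', m = m' + 1 := ⟨m - 1, by omega⟩
      have e1 : m' + 1 - 1 = m' := by omega
      have e2 : m' + 1 + 1 - 1 = m' + 1 := by omega
      rw [e1, e2, pow_succ]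
      push_cast
      ring

lemma geom_bound (m : ℕ) (x : ℝ) (hx0 : 0 ≤ x) (hx : x ≤ 1/2) :
    ∑ k ∈ Finset.Ico 1 m, ((k:ℝ)+1)*x^k ≤ 6*x := by
  rcases Nat.lt_or_ge m 1 with h | h
  · interval_cases m
    simp
    positivity
  calc ∑ k ∈ Finset.Ico 1 m, ((k:ℝ)+1)*x^k
      ≤ ∑ k ∈ Finset.Ico 1 m, ((k:ℝ)+1)*(1/2)^(k-1)*x := by
        apply Finset.sum_le_sum
        intro k hk
        rw [Finset.mem_Ico] at hk
        have hk1 : 1 ≤ k := hk.1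
        have hxk : x^k = x^(k-1) * x := by
          rw [← pow_succ]
          congr 1
          omega
        rw [hxk]
        have h1 : x^(k-1) ≤ (1/2)^(k-1) := pow_le_pow_left₀ hx0 hx (k-1)
        have h2 : (0:ℝ) ≤ (k:ℝ)+1 := by positivity
        calc ((k:ℝ)+1)*(x^(k-1) * x) = (((k:ℝ)+1)*x^(k-1))*x := by ring
          _ ≤ (((k:ℝ)+1)*(1/2)^(k-1))*x := by
              apply mul_le_mul_of_nonneg_right _ hx0
              exact mul_le_mul_of_nonneg_left h1 h2
    _ = (∑ k ∈ Finset.Ico 1 m, ((k:ℝ)+1)*(1/2)^(k-1)) * x := by rw [Finset.sum_mul]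
    _ ≤ 6 * x := by
        apply mul_le_mul_of_nonneg_right _ hx0
        rw [half_sum m h]
        have : (0:ℝ) ≤ (2*(m:ℝ)+4)*(1/2)^(m-1) := by positivity
        linarith


end Auxiliary

section Assembly
open Finset

lemma sum_phi_bound (n : ℕ) (hn : 1 ≤ n) (e : ℝ) (he0 : 0 < e) (he1 : e ≤ 1)
    (hsmall : 30 * ((1-e)/e) / n ≤ 1/2) :
    (∑ k ∈ Finset.Ico 1 n, ((1-e)/e)^k * (Phi n k : ℝ)) / (n.factorial : ℝ)
      ≤ 6 * (30 * ((1-e)/e) / n) := by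
  have hnR : (0:ℝ) < n := by exact_mod_cast hn
  have hfac : (0:ℝ) < (n.factorial : ℝ) := by exact_mod_cast n.factorial_pos
  have hb0 : (0:ℝ) ≤ (1-e)/e := div_nonneg (by linarith) he0.le
  have hx0 : (0:ℝ) ≤ 30 * ((1-e)/e) / n := by positivity
  have hterm : ∀ k ∈ Finset.Ico 1 n,
      ((1-e)/e)^k * (Phi n k : ℝ) / (n.factorial : ℝ)
        ≤ ((k:ℝ)+1) * (30 * ((1-e)/e) / n)^k := by
    intro k hk
    rw [Finset.mem_Ico] at hk
    have hPhi : (Phi n k : ℝ) ≤ ((k:ℝ)+1) * 5^k * ((n-k).factorial : ℝ) := by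
      have := Phi_le k n
      exact_mod_cast this
    have hfr := fact_ratio_bound n k hk.1 (le_of_lt hk.2)
    have hnk : (0:ℝ) < (n:ℝ)^k := by positivity
    have h1 : ((n-k).factorial : ℝ) ≤ 6^k * (n.factorial:ℝ) / (n:ℝ)^k := by
      rw [le_div_iff₀ hnk]
      exact hfr
    calc ((1-e)/e)^k * (Phi n k : ℝ) / (n.factorial : ℝ)
        ≤ ((1-e)/e)^k * (((k:ℝ)+1) * 5^k * ((n-k).factorial : ℝ)) / (n.factorial : ℝ) := by
          gcongr
      _ ≤ ((1-e)/e)^k * (((k:ℝ)+1) * 5^k * (6^k * (n.factorial:ℝ) / (n:ℝ)^k))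
            / (n.factorial : ℝ) := by
          gcongr
      _ = ((k:ℝ)+1) * (30 * ((1-e)/e) / n)^k := by
          have hpow : (30 * ((1-e)/e) / (n:ℝ))^k = 5^k * 6^k * ((1-e)/e)^k / (n:ℝ)^k := by
            rw [div_pow, mul_pow, show (30:ℝ) = 5*6 by norm_num, mul_pow]
          rw [hpow]
          field_simp
  rw [Finset.sum_div]
  calc ∑ k ∈ Finset.Ico 1 n, ((1-e)/e)^k * (Phi n k : ℝ) / (n.factorial : ℝ)
      ≤ ∑ k ∈ Finset.Ico 1 n, ((k:ℝ)+1) * (30 * ((1-e)/e) / n)^k :=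
        Finset.sum_le_sum hterm
    _ ≤ 6 * (30 * ((1-e)/e) / n) := geom_bound n _ hx0 hsmall

end Assembly

/-- If `n εₙ → ∞` then `Var(Y) = o(E[Y]²)` where `E[Y] = n! εₙ^{n-1}`, and consequently
`Y / E[Y] → 1` in probability. -/
theorem stmt17 (ε : ℕ → ℝ) (h0 : ∀ n, 0 < ε n) (h1 : ∀ n, ε n ≤ 1)
    (hlim : Tendsto (fun n : ℕ => n * ε n) atTop atTop) :
    Tendsto (fun n : ℕ =>
        ((∫ ρ, (numOpen n ρ : ℝ) ^ 2
            ∂(percMeasure n (ENNReal.ofReal (ε n)) (ENNReal.ofReal_le_one.mpr (h1 n))))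
          - (Nat.factorial n * ε n ^ (n - 1)) ^ 2)
          / (Nat.factorial n * ε n ^ (n - 1)) ^ 2) atTop (nhds 0) ∧
      ∀ δ : ℝ, 0 < δ →
        Tendsto (fun n : ℕ =>
          ((percMeasure n (ENNReal.ofReal (ε n)) (ENNReal.ofReal_le_one.mpr (h1 n)))
            {ρ | δ < |(numOpen n ρ : ℝ) / (Nat.factorial n * ε n ^ (n - 1)) - 1|}).toReal)
          atTop (nhds 0) := by
  set B : ℕ → ℝ := fun n => 30 * ((1 - ε n)/ε n) / n with hBdef
  have hB0 : ∀ n, 0 ≤ B n := by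
    intro n
    have h0e := h0 n
    have h1e := h1 n
    rw [hBdef]
    have : (0:ℝ) ≤ (1 - ε n)/ε n := div_nonneg (by linarith) h0e.le
    positivity
  have hBle : ∀ n, B n ≤ 30 * ((n:ℝ) * ε n)⁻¹ := by
    intro n
    have h0e := h0 n
    have h1e := h1 n
    have hstep : 30 * ((1 - ε n)/ε n) / (n:ℝ) ≤ 30 * (1/ε n) / n := by
      gcongr
      linarith
    calc B n ≤ 30 * (1/ε n) / n := hstep
      _ = 30 * ((n:ℝ) * ε n)⁻¹ := by
          rw [mul_inv]
          ring
  have hBtend : Tendsto B atTop (nhds 0) := by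
    apply squeeze_zero hB0 hBle
    have hinv := hlim.inv_tendsto_atTop
    have := hinv.const_mul (30:ℝ)
    simpa using this
  set F : ℕ → ℝ := fun n =>
    ((∫ ρ, (numOpen n ρ : ℝ) ^ 2
        ∂(percMeasure n (ENNReal.ofReal (ε n)) (ENNReal.ofReal_le_one.mpr (h1 n))))
      - (Nat.factorial n * ε n ^ (n - 1)) ^ 2)
      / (Nat.factorial n * ε n ^ (n - 1)) ^ 2 with hFdef
  have hFeq : ∀ n, 1 ≤ n → F n
      = (∑ k ∈ Finset.Ico 1 n, ((1 - ε n)/ε n)^k * (Phi n k : ℝ)) / (Nat.factorial n : ℝ) := by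
    intro n hn
    rw [hFdef]
    simp only
    rw [integral_eq_sum n (ε n) (h0 n).le (h1 n) _ (fun ρ => (numOpen n ρ : ℝ)^2)]
    exact expr_eq n hn (ε n) (h0 n) (h1 n)
  have hF0 : ∀ n, 1 ≤ n → 0 ≤ F n := by
    intro n hn
    rw [hFeq n hn]
    apply div_nonneg _ (Nat.cast_nonneg _)
    apply Finset.sum_nonneg
    intro k _
    have h0e := h0 n
    have h1e := h1 n
    have hb : (0:ℝ) ≤ (1 - ε n)/ε n := div_nonneg (by linarith) h0e.le
    positivity
  have hFle : ∀ n, 1 ≤ n → B n ≤ 1/2 → F n ≤ 6 * B n := by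
    intro n hn hsm
    rw [hFeq n hn]
    exact sum_phi_bound n hn (ε n) (h0 n) (h1 n) hsm
  have hev1 : ∀ᶠ n : ℕ in atTop, 1 ≤ n := eventually_ge_atTop 1
  have hev2 : ∀ᶠ n : ℕ in atTop, B n ≤ 1/2 :=
    (hBtend.eventually_lt_const (by norm_num : (0:ℝ) < 1/2)).mono fun n h => le_of_lt h
  have part1 : Tendsto F atTop (nhds 0) := by
    apply tendsto_of_tendsto_of_tendsto_of_le_of_le' tendsto_const_nhds
      (g := fun _ => (0:ℝ)) (h := fun n => 6 * B n)
    · simpa using hBtend.const_mul (6:ℝ)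
    · filter_upwards [hev1] with n hn
      exact hF0 n hn
    · filter_upwards [hev1, hev2] with n hn hsm
      exact hFle n hn hsm
  refine ⟨part1, ?_⟩
  intro δ hδ
  have hcheb : ∀ n : ℕ,
      ((percMeasure n (ENNReal.ofReal (ε n)) (ENNReal.ofReal_le_one.mpr (h1 n)))
        {ρ | δ < |(numOpen n ρ : ℝ) / (Nat.factorial n * ε n ^ (n - 1)) - 1|}).toReal
      ≤ F n / δ^2 := by
    intro n
    have hc := chebyshev n (ε n) (h0 n) (h1 n) (ENNReal.ofReal_le_one.mpr (h1 n)) δ hδ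
    rw [hFdef]
    simp only
    rw [integral_eq_sum n (ε n) (h0 n).le (h1 n) _ (fun ρ => (numOpen n ρ : ℝ)^2)]
    exact hc
  apply squeeze_zero (fun n => ENNReal.toReal_nonneg) hcheb
  have := part1.div_const (δ^2)
  simpa using this

end
end

section
/- Let f be the fitness function on the directed n-hypercube with f(all-zeroes) = a, f(all-ones) = 1-b (where 0 ≤ a ≤ 1-b ≤ 1), and all other vertices i.i.d. Uniform(0,1). Then the probability that an accessible (strictly fitness-increasing) path from all-zeroes to all-ones exists equals P(n, a+b), the corresponding probability in the α-HoC model with α = a+b. -/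
open MeasureTheory
open scoped Classical ENNReal

noncomputable section

/-- Product measure on fitness assignments: each vertex of the hypercube independently
receives a Uniform(0,1) value. -/
def hocMeasure (n : ℕ) : Measure ((Fin n → Bool) → ℝ) :=
  Measure.pi fun _ => volume.restrict (Set.Icc (0 : ℝ) 1)

/-- Fitness function with prescribed values `a` at the all-zeroes vertex and `c` at the
all-ones vertex, and the random value `ω v` elsewhere. -/
def fitness (n : ℕ) (a c : ℝ) (ω : (Fin n → Bool) → ℝ) (v : Fin n → Bool) : ℝ :=
  if v = (fun _ => false) then a else if v = (fun _ => true) then c else ω v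

/-- The monotone path `π` is accessible: fitness strictly increases along it. -/
def accessible (n : ℕ) (a c : ℝ) (ω : (Fin n → Bool) → ℝ) (π : Equiv.Perm (Fin n)) : Prop :=
  ∀ t < n, fitness n a c ω (pathVertex n π t) < fitness n a c ω (pathVertex n π (t + 1))

/-- The number of accessible monotone paths from all-zeroes to all-ones. -/
def numAccessible (n : ℕ) (a c : ℝ) (ω : (Fin n → Bool) → ℝ) : ℕ :=
  (Finset.univ.filter fun π : Equiv.Perm (Fin n) => accessible n a c ω π).card

/-! ### Auxiliary lemmas -/

section Aux

open Set

lemma fract_piece (b : ℝ) {x : ℝ} (hx : x ∈ Ico (0:ℝ) 1) :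
    Int.fract (x + b) = if x < 1 - Int.fract b then x + Int.fract b else x + Int.fract b - 1 := by
  set c := Int.fract b with hc
  have h0 : (0:ℝ) ≤ c := Int.fract_nonneg b
  have h1 : c < 1 := Int.fract_lt_one b
  have hxb : Int.fract (x + b) = Int.fract (x + c) := by
    have : x + b = (x + c) + (⌊b⌋ : ℤ) := by
      have := Int.fract_add_floor b
      rw [hc]; linarith
    rw [this, Int.fract_add_intCast]
  rw [hxb]
  by_cases h : x < 1 - c
  · rw [if_pos h, Int.fract_eq_self.2 ⟨by linarith [hx.1], by linarith⟩]
  · rw [if_neg h]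
    have : x + c = (x + c - 1) + 1 := by ring
    rw [this, Int.fract_add_one, Int.fract_eq_self.2 ⟨by push_neg at h; linarith, by linarith [hx.2]⟩]
    ring

lemma map_fract_add (b : ℝ) :
    Measure.map (fun x => Int.fract (x + b)) (volume.restrict (Ico (0:ℝ) 1))
      = volume.restrict (Ico (0:ℝ) 1) := by
  set c := Int.fract b with hc
  have h0 : (0:ℝ) ≤ c := Int.fract_nonneg b
  have h1 : c < 1 := Int.fract_lt_one b
  have hm : Measurable fun x : ℝ => Int.fract (x + b) :=
    measurable_fract.comp (measurable_id.add_const b)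
  ext s hs
  rw [Measure.map_apply hm hs, Measure.restrict_apply (hm hs), Measure.restrict_apply hs]
  have hset : (fun x => Int.fract (x + b)) ⁻¹' s ∩ Ico 0 1
      = ((· + c) ⁻¹' (s ∩ Ico c 1)) ∪ ((· + (c - 1)) ⁻¹' (s ∩ Ico 0 c)) := by
    ext x
    simp only [mem_inter_iff, mem_preimage, mem_union, mem_Ico]
    constructor
    · rintro ⟨hxs, hx⟩
      rw [fract_piece b (by exact ⟨hx.1, hx.2⟩)] at hxs
      by_cases h : x < 1 - c
      · rw [if_pos h] at hxs
        exact Or.inl ⟨hxs, by linarith [hx.1], by linarith⟩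
      · rw [if_neg h] at hxs
        push_neg at h
        refine Or.inr ⟨?_, ?_, ?_⟩
        · show x + (c - 1) ∈ s
          have h' : x + (c - 1) = x + c - 1 := by ring
          rw [h']; exact hxs
        · show (0:ℝ) ≤ x + (c - 1); linarith
        · show x + (c - 1) < c; linarith [hx.2]
    · rintro (⟨hxs, hlo, hhi⟩ | ⟨hxs, hlo, hhi⟩)
      · have hx : x ∈ Ico (0:ℝ) 1 := ⟨by linarith, by linarith⟩
        refine ⟨?_, hx⟩
        rw [fract_piece b hx, if_pos (by linarith)]; exact hxs
      · have hx : x ∈ Ico (0:ℝ) 1 := ⟨by linarith, by linarith⟩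
        refine ⟨?_, hx⟩
        rw [fract_piece b hx, if_neg (by push_neg; linarith)]
        have : x + c - 1 = x + (c - 1) := by ring
        rw [this]; exact hxs
  rw [hset]
  have hdisj : Disjoint ((· + c) ⁻¹' (s ∩ Ico c 1)) ((· + (c-1)) ⁻¹' (s ∩ Ico 0 c)) := by
    rw [Set.disjoint_left]
    intro x hx hx'
    have h1' := hx.2.2
    have h2' := hx'.2.1
    simp only [] at h1' h2'
    linarith
  rw [measure_union hdisj (measurable_id'.add_const _ (hs.inter measurableSet_Ico)),
    measure_preimage_add_right, measure_preimage_add_right]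
  have : s ∩ Ico c 1 ∪ s ∩ Ico 0 c = s ∩ Ico 0 1 := by
    rw [← inter_union_distrib_left, Set.union_comm, Ico_union_Ico_eq_Ico h0 h1.le]
  rw [← measure_union _ (hs.inter measurableSet_Ico), this]
  · rw [Set.disjoint_left]; rintro x ⟨_, hx1, _⟩ ⟨_, _, hx2⟩; exact absurd hx1 (by linarith)

lemma mpFract (b : ℝ) : MeasurePreserving (fun x => Int.fract (x + b))
    (volume.restrict (Icc (0:ℝ) 1)) (volume.restrict (Icc (0:ℝ) 1)) := by
  have h : volume.restrict (Icc (0:ℝ) 1) = volume.restrict (Ico (0:ℝ) 1) :=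
    (Measure.restrict_congr_set Ico_ae_eq_Icc).symm
  rw [h]
  exact ⟨measurable_fract.comp (measurable_id.add_const b), map_fract_add b⟩

lemma pathVertex_zero (n : ℕ) (π : Equiv.Perm (Fin n)) :
    pathVertex n π 0 = fun _ => false := by
  funext i; simp [pathVertex]

lemma pathVertex_top (n : ℕ) (π : Equiv.Perm (Fin n)) :
    pathVertex n π n = fun _ => true := by
  funext i; simp [pathVertex, (π.symm i).isLt]

lemma pathVertex_ne_bot {n t : ℕ} (hn : 0 < n) (π : Equiv.Perm (Fin n)) (ht : 0 < t) :
    pathVertex n π t ≠ fun _ => false := by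
  intro h
  have := congrFun h (π ⟨0, hn⟩)
  simp [pathVertex] at this
  omega

lemma pathVertex_ne_top {n t : ℕ} (π : Equiv.Perm (Fin n)) (ht : t < n) :
    pathVertex n π t ≠ fun _ => true := by
  have hn : 0 < n := lt_of_le_of_lt (Nat.zero_le t) ht
  intro h
  have := congrFun h (π ⟨n - 1, by omega⟩)
  simp [pathVertex] at this
  omega

lemma const_ne (n : ℕ) (hn : 0 < n) : (fun _ : Fin n => true) ≠ (fun _ : Fin n => false) := by
  intro h
  exact absurd (congrFun h ⟨0, hn⟩) (by simp)

lemma fitness_mid {n t : ℕ} (a c : ℝ) (ω : (Fin n → Bool) → ℝ) (π : Equiv.Perm (Fin n))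
    (h0 : 0 < t) (h1 : t < n) :
    fitness n a c ω (pathVertex n π t) = ω (pathVertex n π t) := by
  rw [fitness, if_neg (pathVertex_ne_bot (lt_of_le_of_lt (Nat.zero_le t) h1) π h0),
    if_neg (pathVertex_ne_top π h1)]

lemma fitness_zero {n : ℕ} (a c : ℝ) (ω : (Fin n → Bool) → ℝ) (π : Equiv.Perm (Fin n)) :
    fitness n a c ω (pathVertex n π 0) = a := by
  rw [pathVertex_zero, fitness, if_pos rfl]

lemma fitness_top {n : ℕ} (hn : 0 < n) (a c : ℝ) (ω : (Fin n → Bool) → ℝ)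
    (π : Equiv.Perm (Fin n)) :
    fitness n a c ω (pathVertex n π n) = c := by
  rw [pathVertex_top, fitness, if_neg (const_ne n hn), if_pos rfl]

/-- The key pointwise equivalence: for fitness assignments with values in `[0,1)`,
the path `π` is accessible for endpoints `(a, 1-b)` iff it is accessible for endpoints
`(a+b, 1)` after cyclically shifting all values by `b`. -/
lemma key_iff (n : ℕ) (hn : 1 ≤ n) (a b : ℝ) (ha : 0 ≤ a) (hab : a ≤ 1 - b) (hb : 1 - b ≤ 1)
    (ω : (Fin n → Bool) → ℝ) (hω : ∀ v, ω v ∈ Ico (0:ℝ) 1) (π : Equiv.Perm (Fin n)) :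
    accessible n a (1 - b) ω π ↔
      accessible n (a + b) 1 (fun v => Int.fract (ω v + b)) π := by
  have hb0 : 0 ≤ b := by linarith
  have hab1 : a + b ≤ 1 := by linarith
  have hn0 : 0 < n := hn
  set v : ℕ → Fin n → Bool := pathVertex n π with hv
  -- fract of values in [0, 1-b) after shifting
  have hfr : ∀ x : ℝ, 0 ≤ x → x + b < 1 → Int.fract (x + b) = x + b := fun x h1 h2 =>
    Int.fract_eq_self.2 ⟨by linarith, h2⟩
  constructor
  · intro H
    -- upper bound on intermediate values
    have hdn : ∀ k t, n - t ≤ k → 0 < t → t < n → ω (v t) < 1 - b := by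
      intro k
      induction k with
      | zero => intro t hk h0 h1; omega
      | succ k ih =>
        intro t hk h0 h1
        have hH := H t h1
        rw [fitness_mid a (1-b) ω π h0 h1] at hH
        by_cases ht : t + 1 = n
        · rw [ht, fitness_top hn0] at hH; exact hH
        · have h1' : t + 1 < n := by omega
          rw [fitness_mid a (1-b) ω π (by omega) h1'] at hH
          have := ih (t+1) (by omega) (by omega) h1'
          linarith
    have hdn' : ∀ t, 0 < t → t < n → ω (v t) < 1 - b := fun t => hdn (n - t) t le_rfl
    -- lower bound on intermediate values
    have hup : ∀ t, 0 < t → t < n → a < ω (v t) := by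
      intro t
      induction t with
      | zero => intro h; omega
      | succ t ih =>
        intro h0 h1
        have hH := H t (by omega)
        rw [fitness_mid a (1-b) ω π (by omega) h1] at hH
        by_cases ht : t = 0
        · subst ht; rw [fitness_zero] at hH; exact hH
        · rw [fitness_mid a (1-b) ω π (by omega) (by omega)] at hH
          have := ih (by omega) (by omega)
          linarith
    intro t h1
    by_cases ht0 : t = 0
    · subst ht0
      rw [fitness_zero]
      simp only [Nat.zero_add]
      by_cases hn1 : 1 = n
      · rw [hn1, fitness_top hn0]
        have hH := H 0 h1
        rw [fitness_zero] at hH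
        simp only [Nat.zero_add] at hH
        rw [hn1, fitness_top hn0] at hH
        linarith
      · have h1' : 1 < n := by omega
        rw [fitness_mid (a+b) 1 _ π one_pos h1']
        have hlo := hup 1 one_pos h1'
        have hhi := hdn' 1 one_pos h1'
        show a + b < Int.fract (ω (v 1) + b)
        rw [hfr _ (by linarith) (by linarith)]
        linarith
    · have ht0' : 0 < t := by omega
      rw [fitness_mid (a+b) 1 _ π ht0' h1]
      have hlo := hup t ht0' h1
      have hhi := hdn' t ht0' h1
      by_cases ht : t + 1 = n
      · rw [ht, fitness_top hn0]
        show Int.fract (ω (v t) + b) < 1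
        exact Int.fract_lt_one _
      · have h1' : t + 1 < n := by omega
        rw [fitness_mid (a+b) 1 _ π (by omega) h1']
        have hH := H t h1
        rw [fitness_mid a (1-b) ω π ht0' h1, fitness_mid a (1-b) ω π (by omega) h1'] at hH
        have hlo' := hup (t+1) (by omega) h1'
        have hhi' := hdn' (t+1) (by omega) h1'
        show Int.fract (ω (v t) + b) < Int.fract (ω (v (t+1)) + b)
        rw [hfr _ (by linarith) (by linarith), hfr _ (by linarith) (by linarith)]
        linarith
  · intro H
    -- lower bound on shifted intermediate values
    have hup : ∀ t, 0 < t → t < n → a + b < Int.fract (ω (v t) + b) := by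
      intro t
      induction t with
      | zero => intro h; omega
      | succ t ih =>
        intro h0 h1
        have hH := H t (by omega)
        rw [fitness_mid (a+b) 1 _ π (by omega) h1] at hH
        by_cases ht : t = 0
        · subst ht; rw [fitness_zero] at hH; exact hH
        · rw [fitness_mid (a+b) 1 _ π (by omega) (by omega)] at hH
          have := ih (by omega) (by omega)
          exact lt_trans this hH
    -- consequence: the shift acts as plain addition on intermediate values
    have heq : ∀ t, 0 < t → t < n →
        Int.fract (ω (v t) + b) = ω (v t) + b ∧ a < ω (v t) := by
      intro t h0 h1
      have hx := hω (v t)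
      by_cases hc : ω (v t) + b < 1
      · have he := hfr _ hx.1 hc
        have := hup t h0 h1
        rw [he] at this
        exact ⟨he, by linarith⟩
      · exfalso
        push_neg at hc
        have he : Int.fract (ω (v t) + b) = ω (v t) + b - 1 := by
          have h' : ω (v t) + b = (ω (v t) + b - 1) + 1 := by ring
          rw [h', Int.fract_add_one,
            Int.fract_eq_self.2 ⟨by linarith, by linarith [hx.2, hb]⟩]
          ring
        have := hup t h0 h1
        rw [he] at this
        have := hx.2
        linarith [hω (v t) |>.2]
    intro t h1
    by_cases ht0 : t = 0
    · subst ht0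
      rw [fitness_zero]
      simp only [Nat.zero_add]
      by_cases hn1 : 1 = n
      · rw [hn1, fitness_top hn0]
        have hH := H 0 h1
        rw [fitness_zero] at hH
        simp only [Nat.zero_add] at hH
        rw [hn1, fitness_top hn0] at hH
        linarith
      · have h1' : 1 < n := by omega
        rw [fitness_mid a (1-b) ω π one_pos h1']
        exact (heq 1 one_pos h1').2
    · have ht0' : 0 < t := by omega
      rw [fitness_mid a (1-b) ω π ht0' h1]
      obtain ⟨he, _⟩ := heq t ht0' h1
      by_cases ht : t + 1 = n
      · rw [ht, fitness_top hn0]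
        have hH := H t h1
        rw [fitness_mid (a+b) 1 _ π ht0' h1, ht, fitness_top hn0, he] at hH
        show ω (v t) < 1 - b
        linarith
      · have h1' : t + 1 < n := by omega
        rw [fitness_mid a (1-b) ω π (by omega) h1']
        have hH := H t h1
        rw [fitness_mid (a+b) 1 _ π ht0' h1, fitness_mid (a+b) 1 _ π (by omega) h1',
          he, (heq (t+1) (by omega) h1').1] at hH
        linarith

lemma measurable_fitness (n : ℕ) (a c : ℝ) (w : Fin n → Bool) :
    Measurable fun ω : (Fin n → Bool) → ℝ => fitness n a c ω w := by
  unfold fitness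
  split_ifs
  · exact measurable_const
  · exact measurable_const
  · exact measurable_pi_apply w

lemma measurable_event (n : ℕ) (a c : ℝ) :
    MeasurableSet {ω : (Fin n → Bool) → ℝ | ∃ π : Equiv.Perm (Fin n), accessible n a c ω π} := by
  have : {ω : (Fin n → Bool) → ℝ | ∃ π : Equiv.Perm (Fin n), accessible n a c ω π}
      = ⋃ π : Equiv.Perm (Fin n), ⋂ t ∈ Finset.range n,
        {ω | fitness n a c ω (pathVertex n π t) < fitness n a c ω (pathVertex n π (t+1))} := by
    ext ω
    simp [accessible, Set.mem_iUnion, Finset.mem_range]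
  rw [this]
  refine MeasurableSet.iUnion fun π => MeasurableSet.biInter (Set.to_countable _) fun t _ =>
    measurableSet_lt (measurable_fitness n a c _) (measurable_fitness n a c _)

end Aux

/-- With endpoint fitnesses `a` at all-zeroes and `1-b` at all-ones (and Uniform(0,1)
fitnesses elsewhere), the probability that an accessible path exists equals `P(n, a+b)`,
the corresponding probability in the (a+b)-HoC model. -/
theorem stmt18 (n : ℕ) (hn : 1 ≤ n) (a b : ℝ) (ha : 0 ≤ a) (hab : a ≤ 1 - b)
    (hb : 1 - b ≤ 1) :
    hocMeasure n {ω | ∃ π : Equiv.Perm (Fin n), accessible n a (1 - b) ω π}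
      = hocMeasure n {ω | ∃ π : Equiv.Perm (Fin n), accessible n (a + b) 1 ω π} := by
  classical
  set μ := hocMeasure n with hμ
  set A := {ω : (Fin n → Bool) → ℝ | ∃ π : Equiv.Perm (Fin n), accessible n a (1 - b) ω π}
  set B := {ω : (Fin n → Bool) → ℝ | ∃ π : Equiv.Perm (Fin n), accessible n (a + b) 1 ω π}
  set T : ((Fin n → Bool) → ℝ) → ((Fin n → Bool) → ℝ) := fun ω v => Int.fract (ω v + b)
    with hT
  have hTmp : MeasurePreserving T μ μ :=
    measurePreserving_pi _ _ fun _ => mpFract b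
  have hB : MeasurableSet B := measurable_event n (a + b) 1
  have h1 : μ (T ⁻¹' B) = μ B := hTmp.measure_preimage hB.nullMeasurableSet
  -- the a.e. full set of assignments with values in [0,1)
  set S : Set ((Fin n → Bool) → ℝ) := Set.univ.pi fun _ => Set.Ico (0:ℝ) 1 with hS
  have hScompl : μ Sᶜ = 0 := by
    have hSmeas : MeasurableSet S :=
      MeasurableSet.univ_pi fun _ => measurableSet_Ico
    have hSfull : μ S = 1 := by
      rw [hμ, hocMeasure, hS, Measure.pi_pi]
      have : (volume.restrict (Set.Icc (0:ℝ) 1)) (Set.Ico (0:ℝ) 1) = 1 := by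
        rw [Measure.restrict_apply measurableSet_Ico,
          Set.inter_eq_left.2 Set.Ico_subset_Icc_self, Real.volume_Ico]
        norm_num
      simp [this]
    have huniv : μ Set.univ = 1 := by
      rw [hμ, hocMeasure, ← Set.pi_univ Set.univ, Measure.pi_pi]
      have : (volume.restrict (Set.Icc (0:ℝ) 1)) Set.univ = 1 := by
        rw [Measure.restrict_apply_univ, Real.volume_Icc]; norm_num
      simp [this]
    rw [measure_compl hSmeas (by rw [hSfull]; exact ENNReal.one_ne_top), huniv, hSfull, tsub_self]
  -- pointwise equivalence on S
  have hkey : ∀ ω ∈ S, (ω ∈ A ↔ T ω ∈ B) := by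
    intro ω hω
    have hω' : ∀ v, ω v ∈ Set.Ico (0:ℝ) 1 := fun v => hω v (Set.mem_univ v)
    constructor
    · rintro ⟨π, hπ⟩
      exact ⟨π, (key_iff n hn a b ha hab hb ω hω' π).1 hπ⟩
    · rintro ⟨π, hπ⟩
      exact ⟨π, (key_iff n hn a b ha hab hb ω hω' π).2 hπ⟩
  -- conclude
  have hAB : μ A = μ (T ⁻¹' B) := by
    apply le_antisymm
    · calc μ A ≤ μ ((T ⁻¹' B) ∪ Sᶜ) := by
            apply measure_mono
            intro ω hω
            by_cases h : ω ∈ S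
            · exact Or.inl ((hkey ω h).1 hω)
            · exact Or.inr h
        _ ≤ μ (T ⁻¹' B) + μ Sᶜ := measure_union_le _ _
        _ = μ (T ⁻¹' B) := by rw [hScompl, add_zero]
    · calc μ (T ⁻¹' B) ≤ μ (A ∪ Sᶜ) := by
            apply measure_mono
            intro ω hω
            by_cases h : ω ∈ S
            · exact Or.inl ((hkey ω h).2 hω)
            · exact Or.inr h
        _ ≤ μ A + μ Sᶜ := measure_union_le _ _
        _ = μ A := by rw [hScompl, add_zero]
  rw [hAB, h1]
end
end
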